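/- Let (m(r), p(r)) be a C¹ solution of the TOV system on an interval of radii r > 0 with p > 0, m > 0 and 2Gm < c²r, and let ω : (0,∞) → (0,∞) be a strictly increasing C¹ function of p with logarithmic derivative f(p) = d ln ω/d ln p. Set ξ = ln r and define along the solution u = 4πr³ρ(p)/m, v = (ρ(p)c²/p)·(Gm/(c²r))/(1 − 2Gm/(c²r)), σ = p/(ρ(p)c²), Υ = (p/ρ(p))·(dρ/dp). Then u, v, ω satisfy the autonomous system du/dξ = u(3 − u + Υh), dv/dξ = v[−(1 − Υ)h + (u − 1)(1 + 2σv)], dω/dξ = f ω h, where h = −v(1 + σ)(1 + σu). -/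

import Mathlib

/-! Pass to logarithmic derivatives with respect to `ξ = ln r`. Along the solution those of `m`
and `p` are `u` and `h`, those of `ρ(p)` and `ω(p)` are the elasticities `Υ` and `f` times `h`,
and `u`, `v`, `ω` are products and quotients of such factors, so their logarithmic derivatives
are sums of the factors' ones. The only non-multiplicative factor is `1 − 2Gm/(c²r)`, and
`σv = (Gm/(c²r))/(1 − 2Gm/(c²r))` absorbs its contribution. -/

open Real Set

/-- `u = 4πr³ρ(p)/m` as a function of `ξ = ln r`. -/
noncomputable def uFun (ρ m p : ℝ → ℝ) (t : ℝ) : ℝ :=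
  4 * Real.pi * Real.exp t ^ 3 * ρ (p (Real.exp t)) / m (Real.exp t)

/-- `v = (ρc²/p)·(Gm/(c²r))/(1 − 2Gm/(c²r))` as a function of `ξ = ln r`. -/
noncomputable def vFun (G c : ℝ) (ρ m p : ℝ → ℝ) (t : ℝ) : ℝ :=
  ρ (p (Real.exp t)) * c ^ 2 / p (Real.exp t) *
    (G * m (Real.exp t) / (c ^ 2 * Real.exp t) /
      (1 - 2 * G * m (Real.exp t) / (c ^ 2 * Real.exp t)))

/-- `ω(p)` as a function of `ξ = ln r`. -/
noncomputable def wFun (ω p : ℝ → ℝ) (t : ℝ) : ℝ := ω (p (Real.exp t))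

/-- `σ = p/(ρ(p)c²)`. -/
noncomputable def sigmaAt (c : ℝ) (ρ : ℝ → ℝ) (q : ℝ) : ℝ := q / (ρ q * c ^ 2)

/-- `Υ = (p/ρ(p))·(dρ/dp)`. -/
noncomputable def upsilonAt (ρ ρ' : ℝ → ℝ) (q : ℝ) : ℝ := q / ρ q * ρ' q

/-- `f = d ln ω / d ln p`. -/
noncomputable def fAt (ω ω' : ℝ → ℝ) (q : ℝ) : ℝ := q * ω' q / ω q

/-- `h = −v(1 + σ)(1 + σu)` along the solution. -/
noncomputable def hFun (G c : ℝ) (ρ m p : ℝ → ℝ) (t : ℝ) : ℝ :=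
  -vFun G c ρ m p t * (1 + sigmaAt c ρ (p (Real.exp t))) *
    (1 + sigmaAt c ρ (p (Real.exp t)) * uFun ρ m p t)

section LogDeriv

variable {𝕜 : Type*} [NontriviallyNormedField 𝕜] {f g : 𝕜 → 𝕜} {f' a b x : 𝕜}

def HasLogDerivAt (f : 𝕜 → 𝕜) (a x : 𝕜) : Prop := HasDerivAt f (f x * a) x

theorem HasLogDerivAt.hasDerivAt (hf : HasLogDerivAt f a x) : HasDerivAt f (f x * a) x := hf

theorem HasLogDerivAt.congr_logDeriv (hf : HasLogDerivAt f a x) (h : a = b) :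
    HasLogDerivAt f b x :=
  h ▸ hf

theorem HasLogDerivAt.mul (hf : HasLogDerivAt f a x) (hg : HasLogDerivAt g b x) :
    HasLogDerivAt (fun y => f y * g y) (a + b) x := by
  unfold HasLogDerivAt at *
  exact (hf.fun_mul hg).congr_deriv (by ring)

theorem HasLogDerivAt.div (hf : HasLogDerivAt f a x) (hg : HasLogDerivAt g b x) (hx : g x ≠ 0) :
    HasLogDerivAt (fun y => f y / g y) (a - b) x := by
  unfold HasLogDerivAt at *
  exact (hf.fun_div hg hx).congr_deriv (by field_simp)

theorem HasLogDerivAt.const_mul (k : 𝕜) (hf : HasLogDerivAt f a x) :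
    HasLogDerivAt (fun y => k * f y) a x := by
  unfold HasLogDerivAt at *
  exact (hf.const_mul k).congr_deriv (by ring)

theorem HasLogDerivAt.mul_const (k : 𝕜) (hf : HasLogDerivAt f a x) :
    HasLogDerivAt (fun y => f y * k) a x := by
  unfold HasLogDerivAt at *
  exact (hf.mul_const k).congr_deriv (by ring)

theorem HasLogDerivAt.pow (n : ℕ) (hf : HasLogDerivAt f a x) :
    HasLogDerivAt (fun y => f y ^ n) (n * a) x := by
  unfold HasLogDerivAt at *
  refine (hf.fun_pow n).congr_deriv ?_
  rcases n with _ | n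
  · simp
  · rw [Nat.add_sub_cancel]
    ring

theorem HasLogDerivAt.const_sub (k : 𝕜) (hf : HasLogDerivAt f a x) (hx : k - f x ≠ 0) :
    HasLogDerivAt (fun y => k - f y) (-(f x * a) / (k - f x)) x := by
  unfold HasLogDerivAt at *
  exact (hf.const_sub k).congr_deriv (by field_simp)

theorem HasLogDerivAt.comp (hg : HasLogDerivAt g a x) (hf : HasDerivAt f f' (g x))
    (hfx : f (g x) ≠ 0) : HasLogDerivAt (fun y => f (g y)) (g x / f (g x) * f' * a) x := by
  unfold HasLogDerivAt at *
  exact (hf.comp x hg).congr_deriv (by field_simp)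

theorem hasLogDerivAt_exp (x : ℝ) : HasLogDerivAt exp 1 x :=
  (hasDerivAt_exp x).congr_deriv (mul_one _).symm

end LogDeriv

theorem sigmaAt_mul_vFun {G c : ℝ} {ρ m p : ℝ → ℝ} {ξ : ℝ} (hc : c ≠ 0)
    (hρ : ρ (p (exp ξ)) ≠ 0) (hP : p (exp ξ) ≠ 0) :
    sigmaAt c ρ (p (exp ξ)) * vFun G c ρ m p ξ =
      G * m (exp ξ) / (c ^ 2 * exp ξ) / (1 - 2 * G * m (exp ξ) / (c ^ 2 * exp ξ)) := by
  simp only [sigmaAt, vFun]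
  field_simp

def IsTOVSolutionAt (G c : ℝ) (ρ m p : ℝ → ℝ) (r : ℝ) : Prop :=
  0 < p r ∧ 0 < m r ∧ 2 * G * m r < c ^ 2 * r ∧
    HasDerivAt m (4 * π * r ^ 2 * ρ (p r)) r ∧
    HasDerivAt p (-(G * m r * ρ (p r) / r ^ 2) *
      (1 + p r / (ρ (p r) * c ^ 2)) *
      (1 + 4 * π * r ^ 3 * p r / (m r * c ^ 2)) *
      (1 - 2 * G * m r / (c ^ 2 * r))⁻¹) r

namespace IsTOVSolutionAt

variable {G c : ℝ} {ρ ρ' m p : ℝ → ℝ} {ξ : ℝ}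

theorem one_sub_compactness_pos (hc : c ≠ 0) (h : IsTOVSolutionAt G c ρ m p (exp ξ)) :
    0 < 1 - 2 * G * m (exp ξ) / (c ^ 2 * exp ξ) := by
  rw [sub_pos, div_lt_one (by positivity)]
  exact h.2.2.1

theorem hasLogDerivAt_mass (h : IsTOVSolutionAt G c ρ m p (exp ξ)) :
    HasLogDerivAt (fun t => m (exp t)) (uFun ρ m p ξ) ξ := by
  refine ((hasLogDerivAt_exp ξ).comp h.2.2.2.1 h.2.1.ne').congr_logDeriv ?_
  rw [uFun]
  ring

theorem hasLogDerivAt_pressure (hc : c ≠ 0) (hρ : 0 < ρ (p (exp ξ)))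
    (h : IsTOVSolutionAt G c ρ m p (exp ξ)) :
    HasLogDerivAt (fun t => p (exp t)) (hFun G c ρ m p ξ) ξ := by
  refine ((hasLogDerivAt_exp ξ).comp h.2.2.2.2 h.1.ne').congr_logDeriv ?_
  have hD := (h.one_sub_compactness_pos hc).ne'
  have hP := h.1.ne'
  have hM := h.2.1.ne'
  simp only [hFun, vFun, uFun, sigmaAt]
  field_simp

theorem hasLogDerivAt_density (hc : c ≠ 0) (hρ : 0 < ρ (p (exp ξ)))
    (hρ' : HasDerivAt ρ (ρ' (p (exp ξ))) (p (exp ξ))) (h : IsTOVSolutionAt G c ρ m p (exp ξ)) :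
    HasLogDerivAt (fun t => ρ (p (exp t)))
      (upsilonAt ρ ρ' (p (exp ξ)) * hFun G c ρ m p ξ) ξ :=
  (h.hasLogDerivAt_pressure hc hρ).comp hρ' hρ.ne'

theorem hasLogDerivAt_uFun (hc : c ≠ 0) (hρ : 0 < ρ (p (exp ξ)))
    (hρ' : HasDerivAt ρ (ρ' (p (exp ξ))) (p (exp ξ))) (h : IsTOVSolutionAt G c ρ m p (exp ξ)) :
    HasLogDerivAt (uFun ρ m p)
      (3 - uFun ρ m p ξ + upsilonAt ρ ρ' (p (exp ξ)) * hFun G c ρ m p ξ) ξ :=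
  (((((hasLogDerivAt_exp ξ).pow 3).const_mul (4 * π)).mul
    (h.hasLogDerivAt_density hc hρ hρ')).div h.hasLogDerivAt_mass h.2.1.ne').congr_logDeriv
    (by push_cast; ring)

theorem hasLogDerivAt_vFun (hc : c ≠ 0) (hρ : 0 < ρ (p (exp ξ)))
    (hρ' : HasDerivAt ρ (ρ' (p (exp ξ))) (p (exp ξ))) (h : IsTOVSolutionAt G c ρ m p (exp ξ)) :
    HasLogDerivAt (vFun G c ρ m p)
      (-((1 - upsilonAt ρ ρ' (p (exp ξ))) * hFun G c ρ m p ξ) +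
        (uFun ρ m p ξ - 1) * (1 + 2 * sigmaAt c ρ (p (exp ξ)) * vFun G c ρ m p ξ)) ξ := by
  have hcr : c ^ 2 * exp ξ ≠ 0 := by positivity
  have hx (k : ℝ) :
      HasLogDerivAt (fun t => k * m (exp t) / (c ^ 2 * exp t)) (uFun ρ m p ξ - 1) ξ :=
    (h.hasLogDerivAt_mass.const_mul k).div ((hasLogDerivAt_exp ξ).const_mul (c ^ 2)) hcr
  have hD := (h.one_sub_compactness_pos hc).ne'
  refine ((((h.hasLogDerivAt_density hc hρ hρ').mul_const (c ^ 2)).div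
    (h.hasLogDerivAt_pressure hc hρ) h.1.ne').mul
    ((hx G).div ((hx (2 * G)).const_sub 1 hD) hD)).congr_logDeriv ?_
  rw [mul_assoc 2 (sigmaAt c ρ _), sigmaAt_mul_vFun hc hρ.ne' h.1.ne']
  field_simp
  ring

theorem hasDerivAt_wFun {ω ω' : ℝ → ℝ} (hc : c ≠ 0) (hρ : 0 < ρ (p (exp ξ)))
    (hω : HasDerivAt ω (ω' (p (exp ξ))) (p (exp ξ))) (hω0 : ω (p (exp ξ)) ≠ 0)
    (h : IsTOVSolutionAt G c ρ m p (exp ξ)) :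
    HasDerivAt (wFun ω p) (fAt ω ω' (p (exp ξ)) * wFun ω p ξ * hFun G c ρ m p ξ) ξ :=
  ((h.hasLogDerivAt_pressure hc hρ).comp hω hω0).hasDerivAt.congr_deriv
    (by simp only [fAt, wFun]; ring)

end IsTOVSolutionAt

theorem stmt0_general
    (G c : ℝ) (hc : 0 < c)
    (ρ ρ' : ℝ → ℝ)
    (hρpos : ∀ q > 0, 0 < ρ q)
    (hρderiv : ∀ q > 0, HasDerivAt ρ (ρ' q) q)
    (ω ω' : ℝ → ℝ)
    (hωpos : ∀ q > 0, 0 < ω q)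
    (hωderiv : ∀ q > 0, HasDerivAt ω (ω' q) q)
    (s : Set ℝ)
    (m p : ℝ → ℝ)
    (hsol : ∀ r ∈ s,
      0 < p r ∧ 0 < m r ∧ 2 * G * m r < c ^ 2 * r ∧
      HasDerivAt m (4 * Real.pi * r ^ 2 * ρ (p r)) r ∧
      HasDerivAt p (-(G * m r * ρ (p r) / r ^ 2) *
        (1 + p r / (ρ (p r) * c ^ 2)) *
        (1 + 4 * Real.pi * r ^ 3 * p r / (m r * c ^ 2)) *
        (1 - 2 * G * m r / (c ^ 2 * r))⁻¹) r) :
    ∀ ξ : ℝ, Real.exp ξ ∈ s →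
      HasDerivAt (uFun ρ m p)
        (uFun ρ m p ξ * (3 - uFun ρ m p ξ +
          upsilonAt ρ ρ' (p (Real.exp ξ)) * hFun G c ρ m p ξ)) ξ ∧
      HasDerivAt (vFun G c ρ m p)
        (vFun G c ρ m p ξ *
          (-((1 - upsilonAt ρ ρ' (p (Real.exp ξ))) * hFun G c ρ m p ξ) +
            (uFun ρ m p ξ - 1) *
              (1 + 2 * sigmaAt c ρ (p (Real.exp ξ)) * vFun G c ρ m p ξ))) ξ ∧
      HasDerivAt (wFun ω p)
        (fAt ω ω' (p (Real.exp ξ)) * wFun ω p ξ * hFun G c ρ m p ξ) ξ := by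
  intro ξ hξ
  have h : IsTOVSolutionAt G c ρ m p (exp ξ) := hsol _ hξ
  have hρ := hρpos _ h.1
  exact ⟨(h.hasLogDerivAt_uFun hc.ne' hρ (hρderiv _ h.1)).hasDerivAt,
    (h.hasLogDerivAt_vFun hc.ne' hρ (hρderiv _ h.1)).hasDerivAt,
    h.hasDerivAt_wFun hc.ne' hρ (hωderiv _ h.1) (hωpos _ h.1).ne'⟩

/-- A C¹ solution of the TOV system, expressed in the variables
`u, v, ω` with independent variable `ξ = ln r`, satisfies the autonomous system
`du/dξ = u(3 − u + Υh)`, `dv/dξ = v[−(1 − Υ)h + (u − 1)(1 + 2σv)]`, `dω/dξ = fωh`,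
where `h = −v(1 + σ)(1 + σu)`. -/
theorem stmt0
    (G c : ℝ) (hG : 0 < G) (hc : 0 < c)
    (ρ ρ' : ℝ → ℝ)
    (hρcont : ContinuousOn ρ (Ici 0))
    (hρC2 : ContDiffOn ℝ 2 ρ (Ioi 0))
    (hρnonneg : ∀ q ≥ 0, 0 ≤ ρ q)
    (hρpos : ∀ q > 0, 0 < ρ q)
    (hρderiv : ∀ q > 0, HasDerivAt ρ (ρ' q) q)
    (hρ'nonneg : ∀ q > 0, 0 ≤ ρ' q)
    (ω ω' : ℝ → ℝ)
    (hωpos : ∀ q > 0, 0 < ω q)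
    (hωmono : StrictMonoOn ω (Ioi 0))
    (hωderiv : ∀ q > 0, HasDerivAt ω (ω' q) q)
    (hω'pos : ∀ q > 0, 0 < ω' q)
    (hω'cont : ContinuousOn ω' (Ioi 0))
    (s : Set ℝ) (hs : s ⊆ Ioi 0) (hso : IsOpen s)
    (m p : ℝ → ℝ)
    (hsol : ∀ r ∈ s,
      0 < p r ∧ 0 < m r ∧ 2 * G * m r < c ^ 2 * r ∧
      HasDerivAt m (4 * Real.pi * r ^ 2 * ρ (p r)) r ∧
      HasDerivAt p (-(G * m r * ρ (p r) / r ^ 2) *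
        (1 + p r / (ρ (p r) * c ^ 2)) *
        (1 + 4 * Real.pi * r ^ 3 * p r / (m r * c ^ 2)) *
        (1 - 2 * G * m r / (c ^ 2 * r))⁻¹) r) :
    ∀ ξ : ℝ, Real.exp ξ ∈ s →
      HasDerivAt (uFun ρ m p)
        (uFun ρ m p ξ * (3 - uFun ρ m p ξ +
          upsilonAt ρ ρ' (p (Real.exp ξ)) * hFun G c ρ m p ξ)) ξ ∧
      HasDerivAt (vFun G c ρ m p)
        (vFun G c ρ m p ξ *
          (-((1 - upsilonAt ρ ρ' (p (Real.exp ξ))) * hFun G c ρ m p ξ) +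
            (uFun ρ m p ξ - 1) *
              (1 + 2 * sigmaAt c ρ (p (Real.exp ξ)) * vFun G c ρ m p ξ))) ξ ∧
      HasDerivAt (wFun ω p)
        (fAt ω ω' (p (Real.exp ξ)) * wFun ω p ξ * hFun G c ρ m p ξ) ξ :=
  stmt0_general G c hc ρ ρ' hρpos hρderiv ω ω' hωpos hωderiv s m p hsol
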